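/- arXiv:2505.23707 — 3 statements merged into one kernel-verified Lean document; each statement's English description precedes it below -/
import Mathlib

section
/- Let Θ be a real symmetric positive definite p×p matrix with eigenvalues λ_1 ≥ … ≥ λ_p > 0, and suppose H ⊆ {1,…,p} with |H| = r satisfies min_{h∈H} α_h ≥ τ · max_{k∉H} α_k for some τ > 0, where α_k = ‖Θ_{·k}‖₂². Then λ_{2r+1}² ≤ (p/τ) · min_{h∈H} α_h ≤ (p/τ) · λ_1². In particular λ_1/λ_{2r+1} ≥ √(τ/p). -/
/-!
Write `Θ = Vᵀ diag(λ) V` with `V` orthogonal. Since `r + (p - 2r - 1) < p`, there is a nonzero `y`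
vanishing on the hub coordinates whose spectral coefficients `V y` are supported on the top
`2r + 1` eigenvalues, so `λ_{2r+1} ‖y‖² ≤ yᵀ Θ y`. As `y` vanishes on `H`, the form `yᵀ Θ y` only
sees the columns of `Θ` outside `H`, and Cauchy–Schwarz bounds it by `(∑_{k ∉ H} α_k)^{1/2} ‖y‖²`;
the hub condition bounds that sum by `(p/τ) min_H α_h`. Finally `α_k = ‖Θ e_k‖² ≤ λ_1²`.
-/

open Matrix BigOperators

namespace Matrix

variable {n : Type*} [Fintype n]

theorem exists_ne_zero_eq_zero_mulVec_eq_zero (V : Matrix n n ℝ) (H T : Finset n)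
    (hcard : H.card + T.card < Fintype.card n) :
    ∃ y : n → ℝ, y ≠ 0 ∧ (∀ h ∈ H, y h = 0) ∧ ∀ i ∈ T, (V *ᵥ y) i = 0 := by
  let f : (n → ℝ) →ₗ[ℝ] (H → ℝ) × (T → ℝ) :=
    (LinearMap.funLeft ℝ ℝ Subtype.val).prod
      (LinearMap.funLeft ℝ ℝ Subtype.val ∘ₗ V.mulVecLin)
  obtain ⟨y, hy, hy0⟩ := (Submodule.ne_bot_iff _).mp <| f.ker_ne_bot_of_finrank_lt <| by
    simpa using hcard
  refine ⟨y, hy0, fun h hh => ?_, fun i hi => ?_⟩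
  · exact congrFun (congrArg Prod.fst hy) ⟨h, hh⟩
  · exact congrFun (congrArg Prod.snd hy) ⟨i, hi⟩

theorem sq_dotProduct_mulVec_le_of_eq_zero (A : Matrix n n ℝ) (s : Finset n) {y : n → ℝ}
    (hy : ∀ l ∉ s, y l = 0) :
    (y ⬝ᵥ A *ᵥ y) ^ 2 ≤ (∑ l ∈ s, ∑ k, A k l ^ 2) * (y ⬝ᵥ y) ^ 2 := by
  have hsupp : ∀ f : n → ℝ, (∀ l ∉ s, f l = 0) → ∑ l ∈ s, f l = ∑ l, f l := fun f hf =>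
    Finset.sum_subset (Finset.subset_univ s) fun l _ hl => hf l hl
  have hquad : y ⬝ᵥ A *ᵥ y = ∑ q ∈ Finset.univ ×ˢ s, (y q.1 * y q.2) * A q.1 q.2 := by
    rw [Finset.sum_product]
    refine Finset.sum_congr rfl fun k _ => ?_
    rw [mulVec, dotProduct, Finset.mul_sum, ← hsupp _ fun l hl => by simp [hy l hl]]
    exact Finset.sum_congr rfl fun l _ => by ring
  have hnorm : ∑ q ∈ Finset.univ ×ˢ s, (y q.1 * y q.2) ^ 2 = (y ⬝ᵥ y) ^ 2 := by
    rw [Finset.sum_product, sq, dotProduct, Finset.sum_mul_sum]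
    refine Finset.sum_congr rfl fun k _ => ?_
    rw [← hsupp _ fun l hl => by simp [hy l hl]]
    exact Finset.sum_congr rfl fun l _ => by ring
  calc (y ⬝ᵥ A *ᵥ y) ^ 2
      ≤ (∑ q ∈ Finset.univ ×ˢ s, (y q.1 * y q.2) ^ 2) *
          ∑ q ∈ Finset.univ ×ˢ s, A q.1 q.2 ^ 2 := hquad ▸ Finset.sum_mul_sq_le_sq_mul_sq _ _ _
    _ = (∑ l ∈ s, ∑ k, A k l ^ 2) * (y ⬝ᵥ y) ^ 2 := by
      rw [hnorm, Finset.sum_product_right, mul_comm]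

section DecidableEq

variable [DecidableEq n]

theorem of_mul_transpose_eq_one_of_orthonormal {v : n → n → ℝ}
    (horth : ∀ i j, v i ⬝ᵥ v j = if i = j then (1 : ℝ) else 0) :
    of v * (of v)ᵀ = 1 := by
  ext i j
  simpa [mul_apply, one_apply, dotProduct] using horth i j

theorem sum_smul_vecMulVec_self (lam : n → ℝ) (v : n → n → ℝ) :
    ∑ i, lam i • vecMulVec (v i) (v i) = (of v)ᵀ * diagonal lam * of v := by
  ext k l
  simp [sum_apply, vecMulVec_apply, mul_apply, diagonal_apply, mul_comm, mul_left_comm]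

theorem mulVec_dotProduct_mulVec_self {V : Matrix n n ℝ} (hV : Vᵀ * V = 1) (y : n → ℝ) :
    V *ᵥ y ⬝ᵥ V *ᵥ y = y ⬝ᵥ y := by
  rw [dotProduct_mulVec, ← vecMul_transpose, vecMul_vecMul, hV, vecMul_one]

theorem dotProduct_transpose_mul_diagonal_mul_mulVec (V : Matrix n n ℝ) (lam y : n → ℝ) :
    y ⬝ᵥ (Vᵀ * diagonal lam * V) *ᵥ y = ∑ i, lam i * (V *ᵥ y) i ^ 2 := by
  rw [← mulVec_mulVec, ← mulVec_mulVec, dotProduct_mulVec, vecMul_transpose, dotProduct]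
  simp only [mulVec_diagonal]
  exact Finset.sum_congr rfl fun i _ => by ring

theorem sum_sq_transpose_mul_diagonal_mul_le {V : Matrix n n ℝ} (hV : V * Vᵀ = 1)
    {lam : n → ℝ} {μ : ℝ} (hlam : ∀ i, lam i ^ 2 ≤ μ) (k : n) :
    ∑ l, (Vᵀ * diagonal lam * V) l k ^ 2 ≤ μ := by
  set w := V *ᵥ Pi.single k 1
  have hcol : (fun l => (Vᵀ * diagonal lam * V) l k) = Vᵀ *ᵥ (diagonal lam *ᵥ w) := by
    rw [mulVec_mulVec, mulVec_mulVec, mulVec_single_one]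
    rfl
  have hw : w ⬝ᵥ w = 1 := by
    rw [mulVec_dotProduct_mulVec_self (mul_eq_one_comm.mp hV)]
    simp
  calc ∑ l, (Vᵀ * diagonal lam * V) l k ^ 2
      = Vᵀ *ᵥ (diagonal lam *ᵥ w) ⬝ᵥ Vᵀ *ᵥ (diagonal lam *ᵥ w) := by
        rw [← hcol, dotProduct]
        simp only [sq]
    _ = ∑ i, lam i ^ 2 * w i ^ 2 := by
        rw [mulVec_dotProduct_mulVec_self (by rwa [transpose_transpose]), dotProduct]
        simp only [mulVec_diagonal]
        exact Finset.sum_congr rfl fun i _ => by ring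
    _ ≤ ∑ i, μ * w i ^ 2 :=
        Finset.sum_le_sum fun i _ => mul_le_mul_of_nonneg_right (hlam i) (sq_nonneg _)
    _ = μ * (w ⬝ᵥ w) := by
        rw [dotProduct, Finset.mul_sum]
        simp only [sq]
    _ = μ := by rw [hw, mul_one]

end DecidableEq

theorem le_dotProduct_transpose_mul_diagonal_mul_mulVec [LinearOrder n] {V : Matrix n n ℝ}
    (hV : Vᵀ * V = 1) {lam : n → ℝ} (hanti : Antitone lam) {m : n} {y : n → ℝ}
    (hy : ∀ i, m < i → (V *ᵥ y) i = 0) :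
    lam m * (y ⬝ᵥ y) ≤ y ⬝ᵥ (Vᵀ * diagonal lam * V) *ᵥ y := by
  rw [dotProduct_transpose_mul_diagonal_mul_mulVec, ← mulVec_dotProduct_mulVec_self hV,
    dotProduct, Finset.mul_sum]
  refine Finset.sum_le_sum fun i _ => ?_
  rcases lt_or_ge m i with hmi | him
  · simp [hy i hmi]
  · rw [← sq]
    exact mul_le_mul_of_nonneg_right (hanti him) (sq_nonneg _)

theorem sq_le_sum_compl_sum_sq_transpose_mul_diagonal_mul {p : ℕ}
    {V : Matrix (Fin p) (Fin p) ℝ} (hV : V * Vᵀ = 1) {lam : Fin p → ℝ} (hanti : Antitone lam)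
    {m : Fin p} (hm : 0 ≤ lam m) {H : Finset (Fin p)} (hH : H.card ≤ m) :
    lam m ^ 2 ≤ ∑ l ∈ Hᶜ, ∑ k, (Vᵀ * diagonal lam * V) k l ^ 2 := by
  obtain ⟨y, hy0, hyH, hyV⟩ := exists_ne_zero_eq_zero_mulVec_eq_zero V H (Finset.Ioi m) <| by
    rw [Fin.card_Ioi, Fintype.card_fin]
    omega
  have hyy : 0 < y ⬝ᵥ y := by simpa using dotProduct_self_star_pos_iff.mpr hy0
  have hlow := le_dotProduct_transpose_mul_diagonal_mul_mulVec (mul_eq_one_comm.mp hV) hanti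
    fun i hi => hyV i (Finset.mem_Ioi.mpr hi)
  have hup := sq_dotProduct_mulVec_le_of_eq_zero (Vᵀ * diagonal lam * V) Hᶜ (y := y)
    fun l hl => hyH l (Finset.notMem_compl.mp hl)
  have hlow_sq := pow_le_pow_left₀ (by positivity) hlow 2
  rw [mul_pow] at hlow_sq
  exact le_of_mul_le_mul_right (hlow_sq.trans hup) (by positivity)

end Matrix

theorem sum_compl_le_card_div_mul_inf' {ι : Type*} [Fintype ι] [DecidableEq ι] {f : ι → ℝ}
    (hf : ∀ i, 0 ≤ f i) {τ : ℝ} (hτ : 0 < τ) {H : Finset ι} (hH : H.Nonempty)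
    (hub : ∀ h ∈ H, ∀ k ∉ H, τ * f k ≤ f h) :
    ∑ k ∈ Hᶜ, f k ≤ (Fintype.card ι / τ) * H.inf' hH f := by
  have hinf : 0 ≤ H.inf' hH f := Finset.le_inf' hH f fun i _ => hf i
  calc ∑ k ∈ Hᶜ, f k ≤ ∑ _k ∈ Hᶜ, H.inf' hH f / τ :=
        Finset.sum_le_sum fun k hk => (le_div_iff₀' hτ).mpr <|
          Finset.le_inf' hH f fun h hh => hub h hh k (Finset.mem_compl.mp hk)
    _ = Hᶜ.card * (H.inf' hH f / τ) := by rw [Finset.sum_const, nsmul_eq_mul]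
    _ ≤ Fintype.card ι * (H.inf' hH f / τ) := by
        gcongr
        exact Hᶜ.card_le_univ
    _ = (Fintype.card ι / τ) * H.inf' hH f := by ring

/-- A hub set with separation `τ` forces a spiked eigenvalue structure:
`λ_{2r+1}² ≤ (p/τ)·min_{h∈H} α_h ≤ (p/τ)·λ_1²` and `λ_1/λ_{2r+1} ≥ √(τ/p)`. -/
theorem hub_implies_eigenvalue_spike {p r : ℕ} (h2r : 2 * r < p) (τ : ℝ) (hτ : 0 < τ)
    (Θ : Matrix (Fin p) (Fin p) ℝ)
    (lam : Fin p → ℝ) (v : Fin p → Fin p → ℝ)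
    (hanti : Antitone lam) (hpos : ∀ i, 0 < lam i)
    (horth : ∀ i j, v i ⬝ᵥ v j = if i = j then (1 : ℝ) else 0)
    (hdecomp : Θ = ∑ i, lam i • Matrix.vecMulVec (v i) (v i))
    (H : Finset (Fin p)) (hcard : H.card = r) (hHne : H.Nonempty)
    (hub : ∀ h ∈ H, ∀ k : Fin p, k ∉ H →
      τ * (∑ l, (Θ l k) ^ 2) ≤ ∑ l, (Θ l h) ^ 2) :
    (lam ⟨2 * r, h2r⟩) ^ 2 ≤ (p / τ) * H.inf' hHne (fun h => ∑ l, (Θ l h) ^ 2) ∧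
    (p / τ) * H.inf' hHne (fun h => ∑ l, (Θ l h) ^ 2) ≤ (p / τ) * (lam ⟨0, by omega⟩) ^ 2 ∧
    Real.sqrt (τ / p) ≤ lam ⟨0, by omega⟩ / lam ⟨2 * r, h2r⟩ := by
  rw [sum_smul_vecMulVec_self] at hdecomp
  have hV := of_mul_transpose_eq_one_of_orthonormal horth
  have hspike : lam ⟨2 * r, h2r⟩ ^ 2 ≤ ∑ l ∈ Hᶜ, ∑ k, Θ k l ^ 2 :=
    hdecomp ▸ sq_le_sum_compl_sum_sq_transpose_mul_diagonal_mul hV hanti (hpos _).le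
      (by simp only [hcard]; omega)
  have hhub : ∑ l ∈ Hᶜ, ∑ k, Θ k l ^ 2 ≤ (p / τ) * H.inf' hHne (fun h => ∑ l, Θ l h ^ 2) := by
    simpa using sum_compl_le_card_div_mul_inf'
      (fun k => Finset.sum_nonneg fun l _ => sq_nonneg (Θ l k)) hτ hHne hub
  have htop : H.inf' hHne (fun h => ∑ l, Θ l h ^ 2) ≤ lam ⟨0, by omega⟩ ^ 2 := by
    obtain ⟨h, hh⟩ := hHne
    exact (Finset.inf'_le _ hh).trans (hdecomp ▸ sum_sq_transpose_mul_diagonal_mul_le hV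
      (fun i => pow_le_pow_left₀ (hpos i).le (hanti (Nat.zero_le _)) 2) h)
  have hsq := mul_le_mul_of_nonneg_left htop (by positivity : (0 : ℝ) ≤ p / τ)
  refine ⟨hspike.trans hhub, hsq, Real.sqrt_le_iff.mpr ⟨(div_pos (hpos _) (hpos _)).le, ?_⟩⟩
  have hspike' := (hspike.trans hhub).trans hsq
  have hp : (0 : ℝ) < p := by exact_mod_cast (by omega : 0 < p)
  have hlam := hpos ⟨2 * r, h2r⟩
  rw [div_pow, div_le_div_iff₀ hp (by positivity)]
  rw [div_mul_eq_mul_div, le_div_iff₀ hτ] at hspike'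
  linarith
end

section
/- Let Θ be a real symmetric positive semidefinite p×p matrix with eigenvalues λ_1 ≥ … ≥ λ_p ≥ 0 and orthonormal eigenvectors v_1,…,v_p. For 1 ≤ s < p define ω_k = Σ_{i=1}^s (v_{ik})² and α_k = Σ_l Θ_{lk}². Then for every k: λ_s² · ω_k ≤ α_k ≤ λ_1² · ω_k + λ_{s+1}² · (1 − ω_k). -/
open Matrix BigOperators

/-- Two-sided bounds relating the weighted degree `α_k` to the influence
measure `ω_k`: `λ_s² ω_k ≤ α_k ≤ λ_1² ω_k + λ_{s+1}² (1−ω_k)`. -/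
theorem weighted_degree_influence_bounds {p s : ℕ} (hs1 : 1 ≤ s) (hsp : s < p)
    (Θ : Matrix (Fin p) (Fin p) ℝ) (hsymm : Θ.IsSymm) (hpsd : Θ.PosSemidef)
    (lam : Fin p → ℝ) (v : Fin p → Fin p → ℝ)
    (hanti : Antitone lam) (hnn : ∀ i, 0 ≤ lam i)
    (horth : ∀ i j, v i ⬝ᵥ v j = if i = j then (1 : ℝ) else 0)
    (hdecomp : Θ = ∑ i, lam i • Matrix.vecMulVec (v i) (v i)) :
    ∀ k : Fin p,
      (lam ⟨s - 1, by omega⟩) ^ 2 *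
          (∑ i ∈ Finset.univ.filter fun i : Fin p => (i : ℕ) < s, (v i k) ^ 2) ≤
        (∑ l, (Θ l k) ^ 2) ∧
      (∑ l, (Θ l k) ^ 2) ≤
        (lam ⟨0, by omega⟩) ^ 2 *
            (∑ i ∈ Finset.univ.filter fun i : Fin p => (i : ℕ) < s, (v i k) ^ 2) +
          (lam ⟨s, hsp⟩) ^ 2 *
            (1 - ∑ i ∈ Finset.univ.filter fun i : Fin p => (i : ℕ) < s, (v i k) ^ 2) := by
  intro k
  set T : Finset (Fin p) := Finset.univ.filter fun i : Fin p => (i : ℕ) < s with hT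
  -- entrywise decomposition
  have hentry : ∀ l, Θ l k = ∑ i, (lam i * v i k) * v i l := by
    intro l
    rw [hdecomp]
    simp [Matrix.sum_apply, Matrix.vecMulVec_apply]
    ring_nf
    apply Finset.sum_congr rfl
    intro i _
    ring
  -- key identity
  have hsum : (∑ l, (Θ l k) ^ 2) = ∑ i, (lam i) ^ 2 * (v i k) ^ 2 := by
    have : (∑ l, (Θ l k) ^ 2)
        = ∑ i, ∑ j, (lam i * v i k) * (lam j * v j k) * (v i ⬝ᵥ v j) := by
      simp only [hentry, sq, Finset.sum_mul_sum]
      rw [Finset.sum_comm]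
      apply Finset.sum_congr rfl; intro i _
      rw [Finset.sum_comm]
      apply Finset.sum_congr rfl; intro j _
      simp only [dotProduct, Finset.mul_sum]
      apply Finset.sum_congr rfl; intro l _
      ring
    rw [this]
    apply Finset.sum_congr rfl; intro i _
    rw [Finset.sum_eq_single i]
    · rw [horth]; simp; ring
    · intro j _ hj; rw [horth]; simp [(Ne.symm hj)]
    · simp
  -- completeness: ∑ i, (v i k)^2 = 1
  have hone : (∑ i, (v i k) ^ 2) = 1 := by
    set M : Matrix (Fin p) (Fin p) ℝ := Matrix.of v with hM
    have h1 : M * Mᵀ = 1 := by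
      ext i j
      simp [hM, Matrix.mul_apply, Matrix.one_apply, ← horth i j, dotProduct]
    have h2 : Mᵀ * M = 1 := mul_eq_one_comm.mp h1
    have := congrFun (congrFun h2 k) k
    simpa [hM, Matrix.mul_apply, Matrix.one_apply, sq] using this
  have hsplit : (∑ i, (lam i) ^ 2 * (v i k) ^ 2)
      = (∑ i ∈ T, (lam i) ^ 2 * (v i k) ^ 2) + ∑ i ∈ Tᶜ, (lam i) ^ 2 * (v i k) ^ 2 :=
    (Finset.sum_add_sum_compl T _).symm
  have honeT : (∑ i ∈ Tᶜ, (v i k) ^ 2) = 1 - ∑ i ∈ T, (v i k) ^ 2 := by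
    have := Finset.sum_add_sum_compl T fun i => (v i k) ^ 2
    rw [hone] at this; linarith
  have hsq : ∀ i j : Fin p, i ≤ j → (lam j) ^ 2 ≤ (lam i) ^ 2 := fun i j h =>
    pow_le_pow_left₀ (hnn j) (hanti h) 2
  constructor
  · rw [hsum, hsplit]
    have h1 : (lam ⟨s - 1, by omega⟩) ^ 2 * (∑ i ∈ T, (v i k) ^ 2)
        ≤ ∑ i ∈ T, (lam i) ^ 2 * (v i k) ^ 2 := by
      rw [Finset.mul_sum]
      apply Finset.sum_le_sum
      intro i hi
      simp only [hT, Finset.mem_filter] at hi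
      exact mul_le_mul_of_nonneg_right
        (hsq i ⟨s - 1, by omega⟩ (by simp [Fin.le_def]; omega)) (sq_nonneg _)
    have h2 : (0 : ℝ) ≤ ∑ i ∈ Tᶜ, (lam i) ^ 2 * (v i k) ^ 2 :=
      Finset.sum_nonneg fun i _ => mul_nonneg (sq_nonneg _) (sq_nonneg _)
    linarith
  · rw [hsum, hsplit, ← honeT]
    have h1 : (∑ i ∈ T, (lam i) ^ 2 * (v i k) ^ 2)
        ≤ (lam ⟨0, by omega⟩) ^ 2 * (∑ i ∈ T, (v i k) ^ 2) := by
      rw [Finset.mul_sum]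
      apply Finset.sum_le_sum
      intro i hi
      exact mul_le_mul_of_nonneg_right
        (hsq ⟨0, by omega⟩ i (by simp [Fin.le_def])) (sq_nonneg _)
    have h2 : (∑ i ∈ Tᶜ, (lam i) ^ 2 * (v i k) ^ 2)
        ≤ (lam ⟨s, hsp⟩) ^ 2 * (∑ i ∈ Tᶜ, (v i k) ^ 2) := by
      rw [Finset.mul_sum]
      apply Finset.sum_le_sum
      intro i hi
      have his : s ≤ (i : ℕ) := by
        by_contra h
        exact (Finset.mem_compl.mp hi) (by simp [hT, Nat.lt_of_not_le h])
      exact mul_le_mul_of_nonneg_right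
        (hsq ⟨s, hsp⟩ i (by simp [Fin.le_def]; omega)) (sq_nonneg _)
    linarith
end

section
/- Let Θ be a real symmetric positive semidefinite p×p matrix with eigenvalues λ_1 ≥ … ≥ λ_p ≥ 0, and let r < p. Suppose H ⊆ {1,…,p} with |H| = r satisfies min_{h∈H} α_h ≥ τ·max_{k∉H} α_k with τ ≥ 1, where α_k = ‖Θ_{·k}‖₂². Then Σ_{i=2r+1}^p λ_i² ≤ Σ_{k∉H} α_k ≤ (p/τ)·min_{h∈H} α_h. -/
open Matrix BigOperators

private lemma filter_lt_card {p r : ℕ} (hr : r ≤ p) :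
    (Finset.univ.filter fun i : Fin p => (i : ℕ) < r).card = r := by
  have : (Finset.univ.filter fun i : Fin p => (i : ℕ) < r) =
      Finset.map (Fin.castLEEmb hr) Finset.univ := by
    ext x
    simp only [Finset.mem_filter, Finset.mem_univ, true_and, Finset.mem_map]
    constructor
    · intro h
      exact ⟨⟨x, h⟩, rfl⟩
    · rintro ⟨a, rfl⟩
      exact a.isLt
  rw [this]; simp

private lemma key_ineq {p r : ℕ} (hr : r < p) (lam : Fin p → ℝ)
    (hanti : Antitone lam) (hnn : ∀ i, 0 ≤ lam i)
    (c : Fin p → ℝ) (h0 : ∀ i, 0 ≤ c i) (h1 : ∀ i, c i ≤ 1)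
    (hsum : ∑ i, c i = r) :
    ∑ i, lam i ^ 2 * c i ≤
      ∑ i ∈ Finset.univ.filter fun i : Fin p => (i : ℕ) < r, lam i ^ 2 := by
  set A := Finset.univ.filter fun i : Fin p => (i : ℕ) < r with hA
  set μ := lam ⟨r, hr⟩ ^ 2 with hμ
  have hsplit : ∑ i, lam i ^ 2 * c i =
      ∑ i ∈ A, lam i ^ 2 * c i + ∑ i ∈ Aᶜ, lam i ^ 2 * c i :=
    (Finset.sum_add_sum_compl A _).symm
  have hcsplit : ∑ i ∈ A, c i + ∑ i ∈ Aᶜ, c i = r := by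
    rw [Finset.sum_add_sum_compl]; exact hsum
  have hcardA : (A.card : ℝ) = r := by rw [hA, filter_lt_card hr.le]
  -- tail bound
  have htail : ∑ i ∈ Aᶜ, lam i ^ 2 * c i ≤ μ * ∑ i ∈ Aᶜ, c i := by
    rw [Finset.mul_sum]
    apply Finset.sum_le_sum
    intro i hi
    have hi' : r ≤ (i : ℕ) := by
      simp [hA, Finset.mem_compl] at hi; omega
    have hle : lam i ≤ lam ⟨r, hr⟩ := hanti (by exact hi')
    have : lam i ^ 2 ≤ μ := by
      rw [hμ]; exact pow_le_pow_left₀ (hnn i) hle 2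
    exact mul_le_mul_of_nonneg_right this (h0 i)
  have hAc : ∑ i ∈ Aᶜ, c i = ∑ i ∈ A, (1 - c i) := by
    rw [Finset.sum_sub_distrib, Finset.sum_const, nsmul_eq_mul, mul_one]
    have : ∑ i ∈ Aᶜ, c i = (r : ℝ) - ∑ i ∈ A, c i := by linarith [hcsplit]
    rw [this, hcardA]
  have hhead : μ * ∑ i ∈ A, (1 - c i) ≤ ∑ i ∈ A, lam i ^ 2 * (1 - c i) := by
    rw [Finset.mul_sum]
    apply Finset.sum_le_sum
    intro i hi
    have hi' : (i : ℕ) ≤ r := by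
      simp [hA] at hi; omega
    have hle : lam ⟨r, hr⟩ ≤ lam i := hanti (by exact hi')
    have h2 : μ ≤ lam i ^ 2 := by
      rw [hμ]; exact pow_le_pow_left₀ (hnn _) hle 2
    exact mul_le_mul_of_nonneg_right h2 (by linarith [h1 i])
  have : ∑ i ∈ A, lam i ^ 2 * c i + ∑ i ∈ A, lam i ^ 2 * (1 - c i)
      = ∑ i ∈ A, lam i ^ 2 := by
    rw [← Finset.sum_add_distrib]
    apply Finset.sum_congr rfl
    intro i _; ring
  calc ∑ i, lam i ^ 2 * c i
      = ∑ i ∈ A, lam i ^ 2 * c i + ∑ i ∈ Aᶜ, lam i ^ 2 * c i := hsplit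
    _ ≤ ∑ i ∈ A, lam i ^ 2 * c i + μ * ∑ i ∈ Aᶜ, c i := by linarith
    _ = ∑ i ∈ A, lam i ^ 2 * c i + μ * ∑ i ∈ A, (1 - c i) := by rw [hAc]
    _ ≤ ∑ i ∈ A, lam i ^ 2 * c i + ∑ i ∈ A, lam i ^ 2 * (1 - c i) := by linarith
    _ = ∑ i ∈ A, lam i ^ 2 := this

/-- Eckart–Young-type tail bound: the tail squared eigenvalues beyond index `2r`
are bounded by the total non-hub weighted degree, which is at most
`(p/τ)·min_{h∈H} α_h`. -/
theorem tail_eigenvalue_bound {p r : ℕ} (hr : r < p) (τ : ℝ) (hτ : 1 ≤ τ)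
    (Θ : Matrix (Fin p) (Fin p) ℝ) (hsymm : Θ.IsSymm) (hpsd : Θ.PosSemidef)
    (lam : Fin p → ℝ) (v : Fin p → Fin p → ℝ)
    (hanti : Antitone lam) (hnn : ∀ i, 0 ≤ lam i)
    (horth : ∀ i j, v i ⬝ᵥ v j = if i = j then (1 : ℝ) else 0)
    (hdecomp : Θ = ∑ i, lam i • Matrix.vecMulVec (v i) (v i))
    (H : Finset (Fin p)) (hcard : H.card = r) (hHne : H.Nonempty)
    (hub : ∀ h ∈ H, ∀ k : Fin p, k ∉ H →
      τ * (∑ l, (Θ l k) ^ 2) ≤ ∑ l, (Θ l h) ^ 2) :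
    (∑ i ∈ Finset.univ.filter fun i : Fin p => 2 * r ≤ (i : ℕ), (lam i) ^ 2) ≤
        (∑ k ∈ Finset.univ.filter fun k : Fin p => k ∉ H, ∑ l, (Θ l k) ^ 2) ∧
      (∑ k ∈ Finset.univ.filter fun k : Fin p => k ∉ H, ∑ l, (Θ l k) ^ 2) ≤
        (p / τ) * H.inf' hHne (fun h => ∑ l, (Θ l h) ^ 2) := by
  have hτ0 : (0 : ℝ) < τ := lt_of_lt_of_le one_pos hτ
  -- entries of Θ
  have hΘ : ∀ l k, Θ l k = ∑ i, lam i * (v i l * v i k) := by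
    intro l k
    rw [hdecomp]
    simp [Matrix.sum_apply, Matrix.vecMulVec_apply, mul_assoc]
  -- column orthonormality
  have hcol : ∀ k k', (∑ i, v i k * v i k') = if k = k' then (1:ℝ) else 0 := by
    intro k k'
    let M : Matrix (Fin p) (Fin p) ℝ := Matrix.of v
    have h1 : M * Mᵀ = 1 := by
      ext i j
      have := horth i j
      simpa [M, Matrix.mul_apply, Matrix.one_apply, dotProduct] using this
    have h2 : Mᵀ * M = 1 := mul_eq_one_comm.mp h1
    have := congrFun (congrFun h2 k) k'
    simpa [M, Matrix.mul_apply, Matrix.one_apply] using this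
  -- α_k formula
  have hα : ∀ k, (∑ l, (Θ l k) ^ 2) = ∑ i, lam i ^ 2 * (v i k) ^ 2 := by
    intro k
    have : ∀ l, (Θ l k) ^ 2 =
        ∑ i, ∑ j, (lam i * lam j * (v i k * v j k)) * (v i l * v j l) := by
      intro l
      rw [hΘ l k, sq, Finset.sum_mul_sum]
      apply Finset.sum_congr rfl; intro i _
      apply Finset.sum_congr rfl; intro j _
      ring
    rw [Finset.sum_congr rfl (fun l _ => this l)]
    rw [Finset.sum_comm]
    have : ∀ i, (∑ l, ∑ j, (lam i * lam j * (v i k * v j k)) * (v i l * v j l))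
        = lam i ^ 2 * (v i k) ^ 2 := by
      intro i
      rw [Finset.sum_comm]
      have hterm : ∀ j, (∑ l, (lam i * lam j * (v i k * v j k)) * (v i l * v j l))
          = (lam i * lam j * (v i k * v j k)) * (if i = j then (1:ℝ) else 0) := by
        intro j
        rw [← Finset.mul_sum]
        congr 1
        simpa [dotProduct] using horth i j
      rw [Finset.sum_congr rfl (fun j _ => hterm j)]
      simp only [mul_ite, mul_one, mul_zero, Finset.sum_ite_eq,
        Finset.mem_univ, if_true]
      ring
    rw [Finset.sum_congr rfl (fun i _ => this i)]
  -- nonnegativity of α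
  have hαnn : ∀ k, (0:ℝ) ≤ ∑ l, (Θ l k) ^ 2 := fun k =>
    Finset.sum_nonneg fun l _ => sq_nonneg _
  -- total
  have htotal : (∑ k, ∑ l, (Θ l k) ^ 2) = ∑ i, lam i ^ 2 := by
    rw [Finset.sum_congr rfl (fun k _ => hα k), Finset.sum_comm]
    apply Finset.sum_congr rfl
    intro i _
    rw [← Finset.mul_sum]
    have : (∑ k, (v i k) ^ 2) = 1 := by
      have := horth i i
      simpa [dotProduct, sq] using this
    rw [this, mul_one]
  -- c i
  set c : Fin p → ℝ := fun i => ∑ k ∈ H, (v i k) ^ 2 with hc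
  have hc0 : ∀ i, 0 ≤ c i := fun i => Finset.sum_nonneg fun k _ => sq_nonneg _
  have hc1 : ∀ i, c i ≤ 1 := by
    intro i
    have hsub : ∑ k ∈ H, (v i k) ^ 2 ≤ ∑ k, (v i k) ^ 2 :=
      Finset.sum_le_sum_of_subset_of_nonneg (Finset.subset_univ H)
        (fun k _ _ => sq_nonneg _)
    have : (∑ k, (v i k) ^ 2) = 1 := by
      have := horth i i
      simpa [dotProduct, sq] using this
    linarith [hsub]
  have hcsum : (∑ i, c i) = r := by
    rw [hc]
    rw [Finset.sum_comm]
    have : ∀ k, (∑ i, (v i k) ^ 2) = 1 := by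
      intro k
      have := hcol k k
      simpa [sq] using this
    rw [Finset.sum_congr rfl (fun k _ => this k)]
    simp [hcard]
  -- sum over H
  have hHsum : (∑ k ∈ H, ∑ l, (Θ l k) ^ 2) = ∑ i, lam i ^ 2 * c i := by
    rw [Finset.sum_congr rfl (fun k (_ : k ∈ H) => hα k), Finset.sum_comm]
    apply Finset.sum_congr rfl
    intro i _
    rw [hc, Finset.mul_sum]
  -- key: sum over H bounded by top-r eigenvalues
  have hkey : (∑ k ∈ H, ∑ l, (Θ l k) ^ 2) ≤
      ∑ i ∈ Finset.univ.filter fun i : Fin p => (i : ℕ) < r, lam i ^ 2 := by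
    rw [hHsum]
    exact key_ineq hr lam hanti hnn c hc0 hc1 hcsum
  -- complement split
  have hcompl : (∑ k ∈ Finset.univ.filter fun k : Fin p => k ∉ H, ∑ l, (Θ l k) ^ 2)
      = (∑ k, ∑ l, (Θ l k) ^ 2) - ∑ k ∈ H, ∑ l, (Θ l k) ^ 2 := by
    have hHf : H = Finset.univ.filter fun k : Fin p => k ∈ H := by
      ext k; simp
    have := Finset.sum_filter_add_sum_filter_not Finset.univ
      (fun k : Fin p => k ∈ H) (fun k => ∑ l, (Θ l k) ^ 2)
    rw [← hHf] at this
    linarith [this]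
  have heig : (∑ i, lam i ^ 2) -
      (∑ i ∈ Finset.univ.filter fun i : Fin p => (i : ℕ) < r, lam i ^ 2)
      = ∑ i ∈ Finset.univ.filter fun i : Fin p => ¬ (i : ℕ) < r, lam i ^ 2 := by
    have := Finset.sum_filter_add_sum_filter_not Finset.univ
      (fun i : Fin p => (i : ℕ) < r) (fun i => lam i ^ 2)
    linarith [this]
  constructor
  · -- first inequality
    have hsubset : (Finset.univ.filter fun i : Fin p => 2 * r ≤ (i : ℕ)) ⊆
        Finset.univ.filter fun i : Fin p => ¬ (i : ℕ) < r := by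
      intro i hi
      simp only [Finset.mem_filter, Finset.mem_univ, true_and] at hi ⊢
      omega
    have h1 : (∑ i ∈ Finset.univ.filter fun i : Fin p => 2 * r ≤ (i : ℕ), lam i ^ 2)
        ≤ ∑ i ∈ Finset.univ.filter fun i : Fin p => ¬ (i : ℕ) < r, lam i ^ 2 :=
      Finset.sum_le_sum_of_subset_of_nonneg hsubset (fun i _ _ => sq_nonneg _)
    rw [hcompl, htotal]
    linarith [h1, hkey, heig]
  · -- second inequality
    set m := H.inf' hHne (fun h => ∑ l, (Θ l h) ^ 2) with hm
    obtain ⟨h0, hh0, hmeq⟩ := Finset.exists_mem_eq_inf' hHne (fun h => ∑ l, (Θ l h) ^ 2)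
    have hm0 : 0 ≤ m := by rw [hm, hmeq]; exact hαnn h0
    have hbound : ∀ k ∈ (Finset.univ.filter fun k : Fin p => k ∉ H),
        (∑ l, (Θ l k) ^ 2) ≤ m / τ := by
      intro k hk
      simp only [Finset.mem_filter, Finset.mem_univ, true_and] at hk
      have : τ * (∑ l, (Θ l k) ^ 2) ≤ m := by
        rw [hm]
        apply Finset.le_inf'
        intro h hh
        exact hub h hh k hk
      rw [div_eq_mul_inv]
      calc (∑ l, (Θ l k) ^ 2) = τ * (∑ l, (Θ l k) ^ 2) * τ⁻¹ := by
            field_simp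
        _ ≤ m * τ⁻¹ := by
            apply mul_le_mul_of_nonneg_right this (by positivity)
    calc (∑ k ∈ Finset.univ.filter fun k : Fin p => k ∉ H, ∑ l, (Θ l k) ^ 2)
        ≤ ∑ k ∈ Finset.univ.filter fun k : Fin p => k ∉ H, m / τ :=
          Finset.sum_le_sum hbound
      _ = ((Finset.univ.filter fun k : Fin p => k ∉ H).card : ℝ) * (m / τ) := by
          rw [Finset.sum_const, nsmul_eq_mul]
      _ ≤ (p : ℝ) * (m / τ) := by
          apply mul_le_mul_of_nonneg_right _ (by positivity)
          have : (Finset.univ.filter fun k : Fin p => k ∉ H).card ≤ p := by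
            calc (Finset.univ.filter fun k : Fin p => k ∉ H).card
                ≤ (Finset.univ : Finset (Fin p)).card := Finset.card_filter_le _ _
              _ = p := Finset.card_univ.trans (Fintype.card_fin p)
          exact_mod_cast this
      _ = (p / τ) * m := by ring
end
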